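/- Consider the cubic u(t) = β₃t³ + β₂t² + β₁t + β₀ on [0, t₁] with t₁ > 0, satisfying u(0) = u₀, u(t₁) = u₁ with κ := (u₁ − u₀)/t₁ > 0, u'(0) = u₀', and u''(t₁) = 0 (inflection at t₁). If κ < u₀' < 3κ, then u''(t) < 0 on (0, t₁) and u'(t₁) > 0. -/

import Mathlib

/-!
The inflection condition `u''(t₁) = 0` forces `β₂ = -3 β₃ t₁`, so `u''(t) = 6 β₃ (t - t₁)`.
Inserting this and `β₁ = u₀'` into the chord condition `u(t₁) - u(0) = κ t₁` gives
`2 β₃ t₁² = u₀' - κ`. Hence `β₃ > 0` exactly when `u₀' > κ`, which makes `u''` negative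
before `t₁`, and `u'(t₁) = u₀' - 3 β₃ t₁² = (3κ - u₀') / 2` is positive exactly when `u₀' < 3κ`.
-/

lemma hasDerivAt_cubic (a b c d x : ℝ) :
    HasDerivAt (fun t => a * t ^ 3 + b * t ^ 2 + c * t + d) (3 * a * x ^ 2 + 2 * b * x + c) x := by
  refine ((((hasDerivAt_pow 3 x).const_mul a).add ((hasDerivAt_pow 2 x).const_mul b)).add
    ((hasDerivAt_id' x).const_mul c)).add_const d |>.congr_deriv ?_
  norm_num
  ring

lemma hasDerivAt_quadratic (a b c x : ℝ) :
    HasDerivAt (fun t => a * t ^ 2 + b * t + c) (2 * a * x + b) x := by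
  refine (((hasDerivAt_pow 2 x).const_mul a).add ((hasDerivAt_id' x).const_mul b)).add_const c
    |>.congr_deriv ?_
  norm_num
  ring

lemma deriv_cubic (a b c d : ℝ) :
    deriv (fun t => a * t ^ 3 + b * t ^ 2 + c * t + d) = fun t => 3 * a * t ^ 2 + 2 * b * t + c :=
  funext fun x => (hasDerivAt_cubic a b c d x).deriv

lemma deriv_deriv_cubic (a b c d : ℝ) :
    deriv (deriv fun t => a * t ^ 3 + b * t ^ 2 + c * t + d) = fun t => 6 * a * t + 2 * b := by
  rw [deriv_cubic]
  funext x
  rw [(hasDerivAt_quadratic (3 * a) (2 * b) c x).deriv]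
  ring

theorem stmt_11_general (β₀ β₁ β₂ β₃ t₁ u₀ u₁ u₀' κ : ℝ)
    (ht₁ : 0 < t₁)
    (u : ℝ → ℝ) (hu : u = fun t => β₃ * t ^ 3 + β₂ * t ^ 2 + β₁ * t + β₀)
    (h0 : u 0 = u₀) (h1 : u t₁ = u₁)
    (hκ : κ = (u₁ - u₀) / t₁)
    (hd0 : deriv u 0 = u₀')
    (hinfl : deriv (deriv u) t₁ = 0)
    (hlo : κ < u₀') (hhi : u₀' < 3 * κ) :
    (∀ t ∈ Set.Ioo 0 t₁, deriv (deriv u) t < 0) ∧ 0 < deriv u t₁ := by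
  subst hu
  rw [deriv_deriv_cubic] at hinfl ⊢
  rw [deriv_cubic] at hd0 ⊢
  beta_reduce at h0 h1 hd0 hinfl ⊢
  norm_num at h0 hd0
  have hβ₂ : β₂ = -3 * β₃ * t₁ := by linarith
  have hchord : κ * t₁ = u₁ - u₀ := by rw [hκ]; field_simp
  have hβ₃ : 2 * β₃ * t₁ ^ 2 = u₀' - κ := by
    refine mul_right_cancel₀ ht₁.ne' ?_
    linear_combination (-1 : ℝ) * h1 + h0 + hchord + t₁ * hd0 + t₁ ^ 2 * hβ₂
  have hβ₃_pos : 0 < β₃ := by nlinarith [pow_pos ht₁ 2]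
  refine ⟨fun t ht => ?_, ?_⟩
  · have hu'' : 6 * β₃ * t + 2 * β₂ = 6 * β₃ * (t - t₁) := by rw [hβ₂]; ring
    rw [hu'']
    exact mul_neg_of_pos_of_neg (by positivity) (sub_neg.mpr ht.2)
  · have hu' : 3 * β₃ * t₁ ^ 2 + 2 * β₂ * t₁ + β₁ = (3 * κ - u₀') / 2 := by
      rw [hβ₂, hd0]
      linear_combination (-3 / 2 : ℝ) * hβ₃
    rw [hu']
    linarith

/-- Case 2.3 of the `C⁰` trajectory predictor proof (motif `s₊₋ᵦ` ending in an
inflection point): a cubic on `[0,t₁]` with `u(0) = u₀`, `u(t₁) = u₁`,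
`κ = (u₁ − u₀)/t₁ > 0`, `u'(0) = u₀'`, `u''(t₁) = 0`, and `κ < u₀' < 3κ`
is strictly concave on `(0,t₁)` and has positive derivative at `t₁`. -/
theorem stmt_11 (β₀ β₁ β₂ β₃ t₁ u₀ u₁ u₀' κ : ℝ)
    (ht₁ : 0 < t₁)
    (u : ℝ → ℝ) (hu : u = fun t => β₃ * t ^ 3 + β₂ * t ^ 2 + β₁ * t + β₀)
    (h0 : u 0 = u₀) (h1 : u t₁ = u₁)
    (hκ : κ = (u₁ - u₀) / t₁) (hκpos : 0 < κ)
    (hd0 : deriv u 0 = u₀')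
    (hinfl : deriv (deriv u) t₁ = 0)
    (hlo : κ < u₀') (hhi : u₀' < 3 * κ) :
    (∀ t ∈ Set.Ioo 0 t₁, deriv (deriv u) t < 0) ∧ 0 < deriv u t₁ :=
  stmt_11_general β₀ β₁ β₂ β₃ t₁ u₀ u₁ u₀' κ ht₁ u hu h0 h1 hκ hd0 hinfl hlo hhi
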